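/- arXiv:2603.08646 — 5 statements merged into one kernel-verified Lean document; each statement's English description precedes it below -/
import Mathlib

section
/- (Locality) For every model M, every formula φ of InqBT+[x], and all teams X, Y whose domains include FV(φ): if the restrictions of X and Y to FV(φ) are equal (X|_{FV(φ)} = Y|_{FV(φ)}), then M ⊨_X φ if and only if M ⊨_Y φ. -/
/-- A first-order signature. -/
structure Sig where
  Func : Type
  farity : Func → ℕ
  Rel : Type
  rarity : Rel → ℕ

/-- Terms over a signature; variables are natural numbers. -/
inductive Tm (σ : Sig) : Type where
  | var : ℕ → Tm σ
  | func : (f : σ.Func) → (Fin (σ.farity f) → Tm σ) → Tm σ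

/-- Formulas of InqBT+[x]: atoms, ⊥, ∧, inquisitive disjunction ⩒ (`ivee`),
    →, ∀ (`all`), inquisitive existential ∃ⁱ (`iex`), and [x] (`box`). -/
inductive Fm (σ : Sig) : Type where
  | rel : (R : σ.Rel) → (Fin (σ.rarity R) → Tm σ) → Fm σ
  | eq : Tm σ → Tm σ → Fm σ
  | bot : Fm σ
  | and : Fm σ → Fm σ → Fm σ
  | ivee : Fm σ → Fm σ → Fm σ
  | imp : Fm σ → Fm σ → Fm σ
  | all : ℕ → Fm σ → Fm σ
  | iex : ℕ → Fm σ → Fm σ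
  | box : ℕ → Fm σ → Fm σ

/-- A first-order model. -/
structure Model (σ : Sig) where
  D : Type
  nonempty : Nonempty D
  interpFunc : (f : σ.Func) → (Fin (σ.farity f) → D) → D
  interpRel : (R : σ.Rel) → (Fin (σ.rarity R) → D) → Prop

variable {σ : Sig}

/-- Value of a term under an assignment. -/
def Tm.val (M : Model σ) (g : ℕ → M.D) : Tm σ → M.D
  | .var n => g n
  | .func f ts => M.interpFunc f (fun i => (ts i).val M g)

/-- Free variables of a term. -/
def Tm.fv : Tm σ → Finset ℕ
  | .var n => {n}
  | .func _ ts => Finset.univ.biUnion (fun i => (ts i).fv)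

/-- Free variables of a formula. -/
def Fm.fv : Fm σ → Finset ℕ
  | .rel _ ts => Finset.univ.biUnion (fun i => (ts i).fv)
  | .eq t₁ t₂ => t₁.fv ∪ t₂.fv
  | .bot => ∅
  | .and φ ψ => φ.fv ∪ ψ.fv
  | .ivee φ ψ => φ.fv ∪ ψ.fv
  | .imp φ ψ => φ.fv ∪ ψ.fv
  | .all x φ => φ.fv.erase x
  | .iex x φ => φ.fv.erase x
  | .box x φ => φ.fv.erase x

/-- The team `X[x↦d]`, assigning the constant value `d` to `x` throughout `X`. -/
def cext (M : Model σ) (X : Set (ℕ → M.D)) (x : ℕ) (d : M.D) : Set (ℕ → M.D) :=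
  (fun g => Function.update g x d) '' X

/-- The team `X[x↦D]`, assigning all possible values to `x`. -/
def allext (M : Model σ) (X : Set (ℕ → M.D)) (x : ℕ) : Set (ℕ → M.D) :=
  ⋃ d : M.D, cext M X x d

/-- Team-semantic support relation `M ⊨_X φ` for InqBT+[x]. -/
def Support (M : Model σ) : Fm σ → Set (ℕ → M.D) → Prop
  | .rel R ts, X => ∀ g ∈ X, M.interpRel R (fun i => (ts i).val M g)
  | .eq t₁ t₂, X => ∀ g ∈ X, t₁.val M g = t₂.val M g
  | .bot, X => X = ∅
  | .and φ ψ, X => Support M φ X ∧ Support M ψ X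
  | .ivee φ ψ, X => Support M φ X ∨ Support M ψ X
  | .imp φ ψ, X => ∀ Y ⊆ X, Support M φ Y → Support M ψ Y
  | .all x φ, X => ∀ d : M.D, Support M φ (cext M X x d)
  | .iex x φ, X => ∃ d : M.D, Support M φ (cext M X x d)
  | .box x φ, X => Support M φ (allext M X x)

lemma tm_val_eq (M : Model σ) (g g' : ℕ → M.D) :
    ∀ t : Tm σ, (∀ n ∈ t.fv, g n = g' n) → t.val M g = t.val M g'
  | .var n, h => h n (Finset.mem_singleton_self n)
  | .func f ts, h => by
    simp only [Tm.val]
    congr 1; funext i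
    exact tm_val_eq M g g' (ts i)
      (fun n hn => h n (Finset.mem_biUnion.mpr ⟨i, Finset.mem_univ i, hn⟩))

lemma res_mono {M : Model σ} {V V' : Set ℕ} (hsub : V' ⊆ V) {X Y : Set (ℕ → M.D)}
    (h : (fun g => V.restrict g) '' X = (fun g => V.restrict g) '' Y) :
    (fun g => V'.restrict g) '' X = (fun g => V'.restrict g) '' Y := by
  have key : ∀ Z : Set (ℕ → M.D),
      (fun g => V'.restrict g) '' Z =
      (fun f : V → M.D => fun v : V' => f ⟨v, hsub v.2⟩) '' ((fun g => V.restrict g) '' Z) := by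
    intro Z; rw [← Set.image_comp]; rfl
  rw [key, key, h]

lemma res_exists {M : Model σ} {V : Set ℕ} {X Y : Set (ℕ → M.D)}
    (h : (fun g => V.restrict g) '' X = (fun g => V.restrict g) '' Y)
    {g} (hg : g ∈ X) : ∃ g' ∈ Y, ∀ n ∈ V, g' n = g n := by
  have : V.restrict g ∈ (fun g => V.restrict g) '' Y := h ▸ ⟨g, hg, rfl⟩
  obtain ⟨g', hg', he⟩ := this
  exact ⟨g', hg', fun n hn => congrFun he ⟨n, hn⟩⟩

lemma res_cext_sub {M : Model σ} {V W : Set ℕ} {X Y : Set (ℕ → M.D)} {x : ℕ} {d : M.D}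
    (hW : V \ {x} ⊆ W)
    (h : (fun g => W.restrict g) '' X = (fun g => W.restrict g) '' Y) :
    (fun g => V.restrict g) '' (cext M X x d) ⊆ (fun g => V.restrict g) '' (cext M Y x d) := by
  rintro f ⟨-, ⟨g, hg, rfl⟩, rfl⟩
  obtain ⟨g', hg', hag⟩ := res_exists h hg
  refine ⟨Function.update g' x d, ⟨g', hg', rfl⟩, ?_⟩
  funext v
  by_cases hv : (v : ℕ) = x
  · simp [Set.restrict, Function.update, hv]
  · simp only [Set.restrict, Function.update]
    show Function.update g' x d (v : ℕ) = Function.update g x d (v : ℕ)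
    rw [Function.update_of_ne hv, Function.update_of_ne hv]
    exact hag v (hW ⟨v.2, hv⟩)

lemma res_cext {M : Model σ} {V W : Set ℕ} {X Y : Set (ℕ → M.D)} {x : ℕ} {d : M.D}
    (hW : V \ {x} ⊆ W)
    (h : (fun g => W.restrict g) '' X = (fun g => W.restrict g) '' Y) :
    (fun g => V.restrict g) '' (cext M X x d) = (fun g => V.restrict g) '' (cext M Y x d) :=
  Set.Subset.antisymm (res_cext_sub hW h) (res_cext_sub hW h.symm)

lemma res_allext {M : Model σ} {V W : Set ℕ} {X Y : Set (ℕ → M.D)} {x : ℕ}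
    (hW : V \ {x} ⊆ W)
    (h : (fun g => W.restrict g) '' X = (fun g => W.restrict g) '' Y) :
    (fun g => V.restrict g) '' (allext M X x) = (fun g => V.restrict g) '' (allext M Y x) := by
  simp only [allext, Set.image_iUnion]
  exact Set.iUnion_congr fun d => res_cext hW h

/-- Locality: support only depends on the restriction of the team
    to the free variables of the formula. -/
theorem stmt4 {σ : Sig} (M : Model σ) (φ : Fm σ) (X Y : Set (ℕ → M.D))
    (h : (fun g => (↑φ.fv : Set ℕ).restrict g) '' X =
         (fun g => (↑φ.fv : Set ℕ).restrict g) '' Y) :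
    Support M φ X ↔ Support M φ Y := by
  induction φ generalizing X Y with
  | rel R ts =>
    have key : ∀ X Y : Set (ℕ → M.D),
        (fun g => (↑(Fm.rel R ts).fv : Set ℕ).restrict g) '' X =
          (fun g => (↑(Fm.rel R ts).fv : Set ℕ).restrict g) '' Y →
        Support M (.rel R ts) X → Support M (.rel R ts) Y := by
      intro X Y h hX
      simp only [Support] at hX ⊢
      intro g' hg'
      obtain ⟨g, hg, hag⟩ := res_exists h.symm hg'
      have harg : (fun i => (ts i).val M g') = (fun i => (ts i).val M g) := by
        funext i
        exact tm_val_eq M g' g (ts i) fun n hn => (hag n (by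
          simp only [Fm.fv, Finset.coe_biUnion, Finset.coe_univ, Set.mem_iUnion]
          exact ⟨i, trivial, hn⟩)).symm
      rw [harg]
      exact hX g hg
    exact ⟨key X Y h, key Y X h.symm⟩
  | eq t₁ t₂ =>
    have key : ∀ X Y : Set (ℕ → M.D),
        (fun g => (↑(Fm.eq t₁ t₂).fv : Set ℕ).restrict g) '' X =
          (fun g => (↑(Fm.eq t₁ t₂).fv : Set ℕ).restrict g) '' Y →
        Support M (.eq t₁ t₂) X → Support M (.eq t₁ t₂) Y := by
      intro X Y h hX
      simp only [Support] at hX ⊢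
      intro g' hg'
      obtain ⟨g, hg, hag⟩ := res_exists h.symm hg'
      have h1 : t₁.val M g' = t₁.val M g :=
        tm_val_eq M g' g t₁ fun n hn => (hag n (by
          simp only [Fm.fv, Finset.coe_union, Set.mem_union, Finset.mem_coe]
          exact Or.inl hn)).symm
      have h2 : t₂.val M g' = t₂.val M g :=
        tm_val_eq M g' g t₂ fun n hn => (hag n (by
          simp only [Fm.fv, Finset.coe_union, Set.mem_union, Finset.mem_coe]
          exact Or.inr hn)).symm
      rw [h1, h2]
      exact hX g hg
    exact ⟨key X Y h, key Y X h.symm⟩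
  | bot =>
    simp only [Support]
    rw [← Set.image_eq_empty (f := fun g => (↑(Fm.bot (σ := σ)).fv : Set ℕ).restrict g),
      ← Set.image_eq_empty (f := fun g => (↑(Fm.bot (σ := σ)).fv : Set ℕ).restrict g), h]
  | and φ ψ ihφ ihψ =>
    have hφ := res_mono (V' := (↑φ.fv : Set ℕ)) (by
      intro n hn
      simp only [Fm.fv, Finset.coe_union, Set.mem_union]; exact Or.inl hn) h
    have hψ := res_mono (V' := (↑ψ.fv : Set ℕ)) (by
      intro n hn
      simp only [Fm.fv, Finset.coe_union, Set.mem_union]; exact Or.inr hn) h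
    simp only [Support]
    rw [ihφ _ _ hφ, ihψ _ _ hψ]
  | ivee φ ψ ihφ ihψ =>
    have hφ := res_mono (V' := (↑φ.fv : Set ℕ)) (by
      intro n hn
      simp only [Fm.fv, Finset.coe_union, Set.mem_union]; exact Or.inl hn) h
    have hψ := res_mono (V' := (↑ψ.fv : Set ℕ)) (by
      intro n hn
      simp only [Fm.fv, Finset.coe_union, Set.mem_union]; exact Or.inr hn) h
    simp only [Support]
    rw [ihφ _ _ hφ, ihψ _ _ hψ]
  | imp φ ψ ihφ ihψ =>
    have subφ : (↑φ.fv : Set ℕ) ⊆ (↑(Fm.imp φ ψ).fv : Set ℕ) := by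
      intro n hn
      simp only [Fm.fv, Finset.coe_union, Set.mem_union]; exact Or.inl hn
    have subψ : (↑ψ.fv : Set ℕ) ⊆ (↑(Fm.imp φ ψ).fv : Set ℕ) := by
      intro n hn
      simp only [Fm.fv, Finset.coe_union, Set.mem_union]; exact Or.inr hn
    have key : ∀ X Y : Set (ℕ → M.D),
        (fun g => (↑(Fm.imp φ ψ).fv : Set ℕ).restrict g) '' X =
          (fun g => (↑(Fm.imp φ ψ).fv : Set ℕ).restrict g) '' Y →
        Support M (.imp φ ψ) X → Support M (.imp φ ψ) Y := by
      intro X Y h hX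
      simp only [Support] at hX ⊢
      intro Z' hZ' hφZ'
      set V := (↑(Fm.imp φ ψ).fv : Set ℕ) with hV
      set Z : Set (ℕ → M.D) :=
        {g | g ∈ X ∧ V.restrict g ∈ (fun g => V.restrict g) '' Z'} with hZdef
      have hZX : Z ⊆ X := fun g hg => hg.1
      have hres : (fun g => V.restrict g) '' Z = (fun g => V.restrict g) '' Z' := by
        apply Set.Subset.antisymm
        · rintro f ⟨g, hg, rfl⟩; exact hg.2
        · rintro f ⟨g, hg, rfl⟩
          obtain ⟨g0, hg0, hag⟩ := res_exists h.symm (hZ' hg)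
          have he : V.restrict g0 = V.restrict g := funext fun v => hag v v.2
          exact ⟨g0, ⟨hg0, by rw [he]; exact ⟨g, hg, rfl⟩⟩, he⟩
      have hφZ : Support M φ Z := (ihφ _ _ (res_mono subφ hres)).mpr hφZ'
      exact (ihψ _ _ (res_mono subψ hres)).mp (hX Z hZX hφZ)
    exact ⟨key X Y h, key Y X h.symm⟩
  | all x φ ih =>
    simp only [Fm.fv] at h
    have h' : ∀ d, (fun g => (↑φ.fv : Set ℕ).restrict g) '' (cext M X x d) =
        (fun g => (↑φ.fv : Set ℕ).restrict g) '' (cext M Y x d) :=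
      fun d => res_cext (by
        intro n hn
        simp only [Finset.coe_erase] at *
        exact hn) h
    simp only [Support]
    exact ⟨fun hS d => (ih _ _ (h' d)).mp (hS d), fun hS d => (ih _ _ (h' d)).mpr (hS d)⟩
  | iex x φ ih =>
    simp only [Fm.fv] at h
    have h' : ∀ d, (fun g => (↑φ.fv : Set ℕ).restrict g) '' (cext M X x d) =
        (fun g => (↑φ.fv : Set ℕ).restrict g) '' (cext M Y x d) :=
      fun d => res_cext (by
        intro n hn
        simp only [Finset.coe_erase] at *
        exact hn) h
    simp only [Support]
    exact ⟨fun ⟨d, hS⟩ => ⟨d, (ih _ _ (h' d)).mp hS⟩,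
      fun ⟨d, hS⟩ => ⟨d, (ih _ _ (h' d)).mpr hS⟩⟩
  | box x φ ih =>
    simp only [Fm.fv] at h
    simp only [Support]
    exact ih _ _ (res_allext (by
        intro n hn
        simp only [Finset.coe_erase] at *
        exact hn) h)
end

section
/- For a term t, a model M, and a team X whose domain contains FV(t), the value question λt := ∀x ?(x = t) (x not occurring in t) is supported by X if and only if t has constant value across the team: for all g, g' ∈ X, [t]_M^g = [t]_M^{g'}. -/
variable {σ : Sig}

/-- `?φ := φ ⩒ ¬φ`, where `¬φ := φ → ⊥`. -/
def qmark {σ : Sig} (φ : Fm σ) : Fm σ := .ivee φ (.imp φ .bot)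

/-- The value question `λt := ∀x ?(x = t)` (with `x` not occurring in `t`). -/
def lamT {σ : Sig} (x : ℕ) (t : Tm σ) : Fm σ := .all x (qmark (.eq (.var x) t))

/-- The value question `λz` for a variable `z` (bound variable chosen fresh). -/
def lamVar {σ : Sig} (z : ℕ) : Fm σ := lamT (z + 1) (.var z)

/-- The dependence atom `=(x, y) := λx → λy`. -/
def depF {σ : Sig} (x y : ℕ) : Fm σ := .imp (lamVar x) (lamVar y)

/-- `s ≠ t := (s = t) → ⊥`. -/
def neqF {σ : Sig} (s t : Tm σ) : Fm σ := .imp (.eq s t) .bot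

lemma val_update_notfv (M : Model σ) (t : Tm σ) (x : ℕ) (hx : x ∉ t.fv)
    (g : ℕ → M.D) (d : M.D) : t.val M (Function.update g x d) = t.val M g := by
  induction t with
  | var n =>
    simp [Tm.fv] at hx
    simp [Tm.val, Function.update, Ne.symm hx]
  | func f ts ih =>
    simp [Tm.fv] at hx
    simp [Tm.val]
    congr 1
    ext i
    exact ih i (hx i)

/-- The value question `λt` is supported by a team iff the value of `t`
    is constant throughout the team. -/
theorem stmt8 {σ : Sig} (M : Model σ) (t : Tm σ) (x : ℕ) (hx : x ∉ t.fv)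
    (X : Set (ℕ → M.D)) :
    Support M (lamT x t) X ↔ ∀ g ∈ X, ∀ g' ∈ X, t.val M g = t.val M g' := by
  simp only [lamT, qmark, Support]
  constructor
  · intro h g hg g' hg'
    rcases h (t.val M g) with hL | hR
    · have h1 := hL _ ⟨g, hg, rfl⟩
      have h2 := hL _ ⟨g', hg', rfl⟩
      simp [Tm.val, Function.update, val_update_notfv M t x hx] at h1 h2
      exact h2
    · exfalso
      have : ({Function.update g x (t.val M g)} : Set (ℕ → M.D)) = ∅ := by
        apply hR
        · intro h hh; exact ⟨g, hg, hh.symm⟩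
        · intro h hh
          rw [Set.mem_singleton_iff] at hh
          subst hh
          simp [Tm.val, Function.update, val_update_notfv M t x hx]
      exact Set.singleton_ne_empty _ this
  · intro h d
    by_cases hX : ∃ g ∈ X, t.val M g = d
    · left
      rintro _ ⟨g, hg, rfl⟩
      obtain ⟨g0, hg0, hval⟩ := hX
      simp [Tm.val, Function.update, val_update_notfv M t x hx]
      rw [← hval]
      exact h g0 hg0 g hg
    · right
      intro Y hY hYe
      ext g1
      simp only [Set.mem_empty_iff_false, iff_false]
      intro hg1
      obtain ⟨g, hg, rfl⟩ := hY hg1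
      have := hYe _ hg1
      simp [Tm.val, Function.update, val_update_notfv M t x hx] at this
      exact hX ⟨g, hg, this.symm⟩
end

section
/- For variables x₁,…,xₙ,y, a model M, and a team X, the formula λx₁ ∧ … ∧ λxₙ → λy is supported by X if and only if for all g, g' ∈ X: if g(xᵢ) = g'(xᵢ) for all 1 ≤ i ≤ n, then g(y) = g'(y). Hence this InqBT formula expresses the dependence atom =(x₁…xₙ, y). -/
variable {σ : Sig}

/-- Finite conjunction of a list of formulas (`⊤ := ⊥ → ⊥` for the empty list). -/
def bigAnd {σ : Sig} : List (Fm σ) → Fm σ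
  | [] => .imp .bot .bot
  | φ :: rest => .and φ (bigAnd rest)

lemma lam_iff {σ : Sig} (M : Model σ) (z : ℕ) (Y : Set (ℕ → M.D)) :
    Support M (lamVar z) Y ↔ ∀ g ∈ Y, ∀ g' ∈ Y, g z = g' z := by
  have hne : z ≠ z + 1 := by omega
  constructor
  · intro h g hg g' hg'
    rcases h (g z) with h1 | h2
    · have hm : Function.update g' (z+1) (g z) ∈ cext M Y (z+1) (g z) := ⟨g', hg', rfl⟩
      have := h1 _ hm
      simpa [Tm.val, Function.update_self, Function.update_of_ne hne] using this
    · have hm : Function.update g (z+1) (g z) ∈ cext M Y (z+1) (g z) := ⟨g, hg, rfl⟩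
      have hsup : Support M (.eq (.var (z+1)) (.var z)) {Function.update g (z+1) (g z)} := by
        intro h' hh'
        simp only [Set.mem_singleton_iff] at hh'
        subst hh'
        simp [Tm.val, Function.update_self, Function.update_of_ne hne]
      have := h2 {Function.update g (z+1) (g z)} (Set.singleton_subset_iff.mpr hm) hsup
      exact absurd this (Set.singleton_ne_empty _)
  · intro h d
    by_cases hex : ∃ g ∈ Y, g z = d
    · rcases hex with ⟨g0, hg0, hd⟩
      left
      rintro h' ⟨g, hg, rfl⟩
      simp only [Tm.val, Function.update_self, Function.update_of_ne hne]
      exact (h g hg g0 hg0).symm ▸ hd.symm ▸ rfl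
    · right
      intro Y' hsub hsup
      ext h'
      simp only [Set.mem_empty_iff_false, iff_false]
      intro hh'
      rcases hsub hh' with ⟨g, hg, rfl⟩
      have := hsup _ hh'
      simp only [Tm.val, Function.update_self, Function.update_of_ne hne] at this
      exact hex ⟨g, hg, this.symm⟩

lemma bigAnd_iff {σ : Sig} (M : Model σ) (xs : List ℕ) (Y : Set (ℕ → M.D)) :
    Support M (bigAnd (xs.map lamVar)) Y ↔
      ∀ x ∈ xs, ∀ g ∈ Y, ∀ g' ∈ Y, g x = g' x := by
  induction xs with
  | nil => simp [bigAnd, Support]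
  | cons a tl ih =>
    simp only [List.map_cons, bigAnd]
    have heq : Support M (.and (lamVar a) (bigAnd (tl.map lamVar))) Y ↔
        Support M (lamVar a) Y ∧ Support M (bigAnd (tl.map lamVar)) Y := Iff.rfl
    rw [heq, lam_iff, ih]
    simp only [List.mem_cons]
    constructor
    · rintro ⟨h1, h2⟩ x (rfl | hx)
      · exact h1
      · exact h2 x hx
    · intro h
      exact ⟨h a (Or.inl rfl), fun x hx => h x (Or.inr hx)⟩

/-- `λx₁ ∧ … ∧ λxₙ → λy` expresses the dependence atom `=(x₁…xₙ, y)`: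
    it is supported by `X` iff the values of `x₁,…,xₙ` functionally
    determine the value of `y` in `X`. -/
theorem stmt9 {σ : Sig} (M : Model σ) (xs : List ℕ) (y : ℕ)
    (X : Set (ℕ → M.D)) :
    Support M (.imp (bigAnd (xs.map lamVar)) (lamVar y)) X ↔
      ∀ g ∈ X, ∀ g' ∈ X, (∀ x ∈ xs, g x = g' x) → g y = g' y := by
  constructor
  · intro h g hg g' hg' hagree
    have hsub : {g, g'} ⊆ X := by
      intro a ha
      rcases ha with rfl | ha
      · exact hg
      · rw [Set.mem_singleton_iff] at ha; subst ha; exact hg'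
    have hpre : Support M (bigAnd (xs.map lamVar)) {g, g'} := by
      rw [bigAnd_iff]
      intro x hx a ha b hb
      rcases ha with rfl | ha <;> rcases hb with rfl | hb <;>
        simp_all [hagree x hx]
    have := (lam_iff M y _).mp (h {g, g'} hsub hpre)
    exact this g (by simp) g' (by simp)
  · intro h Y hsub hpre
    rw [lam_iff]
    rw [bigAnd_iff] at hpre
    intro g hg g' hg'
    exact h g (hsub hg) g' (hsub hg') (fun x hx => hpre x hx g hg g' hg')
end

section
/- Let φ(x,y) := ( =(x,y) ∧ =(y,x) ∧ ∃ⁱz (z ≠ y) → ∃ⁱu (u ≠ x) ). For every model M = (D, I) over the empty vocabulary, the full team X_D consisting of all assignments over {x,y} (i.e., X_D[x,y] = D²) supports φ(x,y) if and only if D is finite. -/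
variable {σ : Sig}

/-- The empty vocabulary. -/
def EmptySig : Sig := ⟨Empty, fun f => f.elim, Empty, fun r => r.elim⟩

/-- The relational encoding of a team over the variables `x = 0`, `y = 1`:
    `Y[x,y] = {(g(x), g(y)) | g ∈ Y}`. -/
def teamRel (M : Model EmptySig) (Y : Set (ℕ → M.D)) : Set (M.D × M.D) :=
  (fun g => (g 0, g 1)) '' Y

/-- `φ(x,y) := ( =(x,y) ∧ =(y,x) ∧ ∃ⁱz (z ≠ y) → ∃ⁱu (u ≠ x) )`,
    with `x = 0`, `y = 1`, `z = 2`, `u = 3`. -/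
def phiXY : Fm EmptySig :=
  .imp (.and (depF 0 1) (.and (depF 1 0) (.iex 2 (neqF (.var 2) (.var 1)))))
       (.iex 3 (neqF (.var 3) (.var 0)))

section Helpers
variable {M : Model σ}

lemma mem_cext {X : Set (ℕ → M.D)} {x : ℕ} {d : M.D} {g' : ℕ → M.D} :
    g' ∈ cext M X x d ↔ ∃ g ∈ X, Function.update g x d = g' := Set.mem_image _ _ _

lemma support_lam {z : ℕ} {Z : Set (ℕ → M.D)} :
    Support M (lamVar z) Z ↔ ∀ g ∈ Z, ∀ h ∈ Z, g z = h z := by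
  have hne : z ≠ z + 1 := by omega
  constructor
  · intro h g hg h' hg'
    rcases h (g z) with hc | hc
    · have := hc (Function.update h' (z+1) (g z)) ⟨h', hg', rfl⟩
      simp only [Tm.val] at this
      rw [Function.update_self, Function.update_of_ne hne] at this
      exact this
    · exfalso
      have := hc {Function.update g (z+1) (g z)}
        (by intro w hw; simp at hw; exact hw ▸ ⟨g, hg, rfl⟩)
        (by intro w hw; simp at hw; subst hw
            simp only [Tm.val]
            rw [Function.update_self, Function.update_of_ne hne])
      simp only [Support] at this
      simp at this
  · intro h d
    by_cases hc : ∀ g ∈ Z, g z = d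
    · left
      rintro g' ⟨g, hg, rfl⟩
      simp only [Tm.val]
      rw [Function.update_self, Function.update_of_ne hne]
      exact (hc g hg).symm
    · right
      push_neg at hc
      obtain ⟨g₀, hg₀, hg₀d⟩ := hc
      intro W hW hWeq
      ext g'; simp only [Set.mem_empty_iff_false, iff_false]
      intro hg'W
      obtain ⟨g, hg, rfl⟩ := mem_cext.mp (hW hg'W)
      have := hWeq _ hg'W
      simp only [Tm.val] at this
      rw [Function.update_self, Function.update_of_ne hne] at this
      exact hg₀d (h g₀ hg₀ g hg ▸ this.symm ▸ rfl)

lemma support_iex_neq {k j : ℕ} (hkj : k ≠ j) {Y : Set (ℕ → M.D)} :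
    Support M (.iex k (neqF (.var k) (.var j))) Y ↔ ∃ d, ∀ g ∈ Y, d ≠ g j := by
  constructor
  · rintro ⟨d, hd⟩
    refine ⟨d, fun g hg hdg => ?_⟩
    have := hd {Function.update g k d} (by intro w hw; simp at hw; exact hw ▸ ⟨g, hg, rfl⟩)
      (by intro w hw; simp at hw; subst hw
          simp only [Tm.val]
          rw [Function.update_self, Function.update_of_ne (Ne.symm hkj)]
          exact hdg)
    simp only [Support] at this; simp at this
  · rintro ⟨d, hd⟩
    refine ⟨d, fun W hW hWeq => ?_⟩
    ext g'; simp only [Set.mem_empty_iff_false, iff_false]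
    intro hg'W
    obtain ⟨g, hg, rfl⟩ := mem_cext.mp (hW hg'W)
    have := hWeq _ hg'W
    simp only [Tm.val] at this
    rw [Function.update_self, Function.update_of_ne (Ne.symm hkj)] at this
    exact hd g hg this

end Helpers

/-- The full team over `{x,y}` (all assignments) supports `φ(x,y)` iff the
    domain of the model is finite. -/
theorem stmt11 (M : Model EmptySig) :
    Support M phiXY (Set.univ : Set (ℕ → M.D)) ↔ Finite M.D := by
  constructor
  · intro h
    by_contra hfin
    rw [not_finite_iff_infinite] at hfin
    obtain ⟨f, hfinj, d₀, hd₀⟩ :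
        ∃ f : M.D → M.D, Function.Injective f ∧ ∃ d₀, ∀ a, f a ≠ d₀ := by
      classical
      let e := Infinite.natEmbedding M.D
      refine ⟨fun d => if h : ∃ n, e n = d then e (h.choose + 1) else d, ?_, e 0, ?_⟩
      · intro a b hab
        simp only at hab
        by_cases ha : ∃ n, e n = a <;> by_cases hb : ∃ n, e n = b
        · rw [dif_pos ha, dif_pos hb] at hab
          have h1 := e.injective hab
          rw [← ha.choose_spec, ← hb.choose_spec]
          congr 1
          omega
        · rw [dif_pos ha, dif_neg hb] at hab
          exact absurd ⟨_, hab⟩ hb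
        · rw [dif_neg ha, dif_pos hb] at hab
          exact absurd ⟨_, hab.symm⟩ ha
        · rwa [dif_neg ha, dif_neg hb] at hab
      · intro a heq
        simp only at heq
        by_cases ha : ∃ n, e n = a
        · rw [dif_pos ha] at heq
          have := e.injective heq
          omega
        · rw [dif_neg ha] at heq
          exact ha ⟨0, heq.symm⟩
    set Y : Set (ℕ → M.D) := {g | g 1 = f (g 0)} with hYdef
    have hant : Support M (.and (depF 0 1)
        (.and (depF 1 0) (.iex 2 (neqF (.var 2) (.var 1))))) Y := by
      refine ⟨?_, ?_, ?_⟩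
      · intro Z hZ hl
        rw [support_lam] at hl ⊢
        intro g hg h' hh'
        have h1 : g 1 = f (g 0) := hZ hg
        have h2 : h' 1 = f (h' 0) := hZ hh'
        rw [h1, h2, hl g hg h' hh']
      · intro Z hZ hl
        rw [support_lam] at hl ⊢
        intro g hg h' hh'
        have h1 : g 1 = f (g 0) := hZ hg
        have h2 : h' 1 = f (h' 0) := hZ hh'
        exact hfinj (by rw [← h1, ← h2, hl g hg h' hh'])
      · rw [support_iex_neq (by norm_num)]
        refine ⟨d₀, fun g hg heq => ?_⟩
        have : g 1 = f (g 0) := hg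
        exact hd₀ (g 0) (by rw [← this, ← heq])
    have hconc := h Y (Set.subset_univ _) hant
    rw [support_iex_neq (by norm_num)] at hconc
    obtain ⟨d, hd⟩ := hconc
    have hgY : (fun n => if n = 0 then d else f d) ∈ Y := by
      simp [hYdef]
    exact hd _ hgY (by simp)
  · intro hfin Y _ hant
    obtain ⟨hd01, hd10, hiex⟩ := hant
    rw [support_iex_neq (by norm_num)] at hiex
    obtain ⟨d₀, hd₀⟩ := hiex
    rw [support_iex_neq (by norm_num)]
    by_contra hcon
    push_neg at hcon
    choose G hG1 hG2 using hcon
    set F : M.D → M.D := fun d => G d 1 with hFdef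
    have hinj : Function.Injective F := by
      intro a b hab
      have hsub : {G a, G b} ⊆ Y := by
        intro w hw
        rcases hw with rfl | hw
        · exact hG1 a
        · simp at hw; exact hw ▸ hG1 b
      have hl1 : Support M (lamVar 1) {G a, G b} := by
        rw [support_lam]
        intro g hg h' hh'
        have hab' : G a 1 = G b 1 := hab
        rcases hg with rfl | hg
        · rcases hh' with rfl | hh'
          · rfl
          · simp only [Set.mem_singleton_iff] at hh'
            rw [hh']; exact hab'
        · simp only [Set.mem_singleton_iff] at hg
          rcases hh' with rfl | hh'
          · rw [hg]; exact hab'.symm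
          · simp only [Set.mem_singleton_iff] at hh'
            rw [hg, hh']
      have := hd10 _ hsub hl1
      rw [support_lam] at this
      have h0 : G a 0 = G b 0 := this (G a) (by simp) (G b) (by simp)
      rw [hG2 a, hG2 b, h0]
    have hsurj := Finite.injective_iff_surjective.mp hinj
    obtain ⟨a, ha⟩ := hsurj d₀
    exact hd₀ (G a) (hG1 a) ha.symm
end

section
/- The open formula φ(x,y) := ( =(x,y) ∧ =(y,x) ∧ ∃ⁱz (z≠y) → ∃ⁱu (u≠x) ) of InqBT is not first-order expressible over teams: there is no first-order sentence φ*(R), in the vocabulary with one binary relation symbol R, such that for all models M (empty vocabulary) and all teams X over {x,y}: M ⊨_X φ(x,y) iff (M, X[x,y]) ⊨ φ*(R), where X[x,y] = {(g(x),g(y)) | g∈X}. -/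
variable {σ : Sig}

/-- Standard Tarskian satisfaction (on the classical fragment this is the
    usual first-order semantics; the inquisitive operators are given their
    classical readings, which are never used for classical formulas). -/
def Tarski (M : Model σ) (g : ℕ → M.D) : Fm σ → Prop
  | .rel R ts => M.interpRel R (fun i => (ts i).val M g)
  | .eq t₁ t₂ => t₁.val M g = t₂.val M g
  | .bot => False
  | .and φ ψ => Tarski M g φ ∧ Tarski M g ψ
  | .ivee φ ψ => Tarski M g φ ∨ Tarski M g ψ
  | .imp φ ψ => Tarski M g φ → Tarski M g ψ
  | .all x φ => ∀ d : M.D, Tarski M (Function.update g x d) φ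
  | .iex x φ => ∃ d : M.D, Tarski M (Function.update g x d) φ
  | .box x φ => ∀ d : M.D, Tarski M (Function.update g x d) φ

/-- Classical formulas: the ⩒-, ∃ⁱ- and [x]-free fragment. -/
inductive IsClassical : Fm σ → Prop
  | rel (R : σ.Rel) (ts : Fin (σ.rarity R) → Tm σ) : IsClassical (.rel R ts)
  | eq (t₁ t₂ : Tm σ) : IsClassical (.eq t₁ t₂)
  | bot : IsClassical .bot
  | and {φ ψ : Fm σ} : IsClassical φ → IsClassical ψ → IsClassical (.and φ ψ)
  | imp {φ ψ : Fm σ} : IsClassical φ → IsClassical ψ → IsClassical (.imp φ ψ)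
  | all {φ : Fm σ} (x : ℕ) : IsClassical φ → IsClassical (.all x φ)

/-- The vocabulary of one binary relation symbol `R`. -/
abbrev RelSig : Sig := ⟨Empty, fun f => f.elim, Unit, fun _ => 2⟩

/-- The structure `(M, X[x,y])`: the domain of `M` with `R` interpreted as
    the relational encoding `X[x,y] = {(g(x), g(y)) | g ∈ X}` of the team. -/
def teamModel (M : Model EmptySig) (X : Set (ℕ → M.D)) : Model RelSig :=
  ⟨M.D, M.nonempty, fun f => f.elim, fun _ v => (v 0, v 1) ∈ teamRel M X⟩


section Aux

variable {σ : Sig}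

/-- Quantifier depth of a formula. -/
def Fm.depth : Fm σ → ℕ
  | .rel _ _ => 0
  | .eq _ _ => 0
  | .bot => 0
  | .and φ ψ => max φ.depth ψ.depth
  | .ivee φ ψ => max φ.depth ψ.depth
  | .imp φ ψ => max φ.depth ψ.depth
  | .all _ φ => φ.depth + 1
  | .iex _ φ => φ.depth + 1
  | .box _ φ => φ.depth + 1

lemma supp_neq {M : Model σ} {s t : Tm σ} {Z : Set (ℕ → M.D)} :
    Support M (neqF s t) Z ↔ ∀ g ∈ Z, s.val M g ≠ t.val M g := by
  constructor
  · intro H g hg heq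
    have h1 : ({g} : Set (ℕ → M.D)) = ∅ :=
      H {g} (Set.singleton_subset_iff.2 hg)
        (by intro g' hg'; rw [Set.mem_singleton_iff] at hg'; subst hg'; exact heq)
    exact Set.singleton_ne_empty g h1
  · intro H Y hY hY2
    exact Set.eq_empty_iff_forall_notMem.2 fun g hg => H g (hY hg) (hY2 g hg)

lemma supp_lam {M : Model σ} {z : ℕ} {W : Set (ℕ → M.D)} :
    Support M (lamVar z) W ↔ ∀ g ∈ W, ∀ h ∈ W, g z = h z := by
  have hne : z ≠ z + 1 := Nat.ne_of_lt (Nat.lt_succ_self z)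
  have key : ∀ d : M.D,
      Support M (qmark (.eq (.var (z+1)) (.var z))) (cext M W (z+1) d) ↔
      ((∀ g ∈ W, g z = d) ∨ (∀ g ∈ W, g z ≠ d)) := by
    intro d
    have h1 : Support M (.eq (.var (z+1)) (.var z)) (cext M W (z+1) d) ↔
        ∀ g ∈ W, g z = d := by
      constructor
      · intro H g hg
        have := H (Function.update g (z+1) d) ⟨g, hg, rfl⟩
        simp only [Tm.val, Function.update_self, Function.update_of_ne hne] at this
        exact this.symm
      · rintro H g' ⟨g, hg, rfl⟩
        simp only [Tm.val, Function.update_self, Function.update_of_ne hne]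
        exact (H g hg).symm
    have h2 : Support M (.imp (.eq (.var (z+1)) (.var z)) .bot) (cext M W (z+1) d) ↔
        ∀ g ∈ W, g z ≠ d := by
      have := @supp_neq σ M (.var (z+1)) (.var z) (cext M W (z+1) d)
      rw [neqF] at this
      rw [this]
      constructor
      · intro H g hg hgz
        exact H (Function.update g (z+1) d) ⟨g, hg, rfl⟩
          (by simp only [Tm.val, Function.update_self, Function.update_of_ne hne]
              exact hgz.symm)
      · rintro H g' ⟨g, hg, rfl⟩ heq
        simp only [Tm.val, Function.update_self, Function.update_of_ne hne] at heq
        exact H g hg heq.symm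
    show (Support M (.eq (.var (z+1)) (.var z)) (cext M W (z+1) d) ∨
      Support M (.imp (.eq (.var (z+1)) (.var z)) .bot) (cext M W (z+1) d)) ↔ _
    rw [h1, h2]
  constructor
  · intro H g hg h hh
    rcases (key (g z)).1 (H (g z)) with hc | hc
    · exact ((hc g hg).trans (hc h hh).symm)
    · exact absurd rfl (hc g hg)
  · intro Hc d
    refine (key d).2 ?_
    by_cases hex : ∃ g ∈ W, g z = d
    · obtain ⟨g, hg, hgz⟩ := hex
      exact Or.inl fun h hh => (Hc h hh g hg).trans hgz
    · push_neg at hex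
      exact Or.inr hex

lemma supp_dep {M : Model σ} {x y : ℕ} {Y : Set (ℕ → M.D)} :
    Support M (depF x y) Y ↔ ∀ g ∈ Y, ∀ h ∈ Y, g x = h x → g y = h y := by
  constructor
  · intro H g hg h hh hxy
    have hsub : ({g, h} : Set (ℕ → M.D)) ⊆ Y := by
      intro k hk
      rcases hk with rfl | hk
      · exact hg
      · rw [Set.mem_singleton_iff] at hk; subst hk; exact hh
    have hx : Support M (lamVar x) ({g, h} : Set (ℕ → M.D)) := by
      rw [supp_lam]
      intro a ha b hb
      rcases ha with rfl | ha <;> rcases hb with rfl | hb <;>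
        first
          | rfl
          | (rw [Set.mem_singleton_iff] at *; subst_vars; first | rfl | exact hxy | exact hxy.symm)
    have hy := H ({g, h} : Set (ℕ → M.D)) hsub hx
    rw [supp_lam] at hy
    exact hy g (Or.inl rfl) h (Or.inr rfl)
  · intro H W hW hWx
    rw [supp_lam] at hWx ⊢
    intro a ha b hb
    exact H a (hW ha) b (hW hb) (hWx a ha b hb)

end Aux

/-- A model over the empty vocabulary with domain `Fin (n+1)`. -/
abbrev Mfin (n : ℕ) : Model EmptySig := ⟨Fin (n+1), ⟨0⟩, fun f => f.elim, fun r => r.elim⟩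

/-- A model over the empty vocabulary with domain `ℕ`. -/
abbrev MNat : Model EmptySig := ⟨ℕ, ⟨0⟩, fun f => f.elim, fun r => r.elim⟩

lemma supportA (M : Model EmptySig) (hfin : Finite M.D) :
    Support M phiXY Set.univ := by
  intro Y _ hant
  obtain ⟨hd01, hd10, hiex⟩ := hant
  obtain ⟨d₀, hne⟩ := hiex
  rw [supp_neq] at hne
  have hne' : ∀ g ∈ Y, d₀ ≠ g 1 := by
    intro g hg
    have := hne (Function.update g 2 d₀) ⟨g, hg, rfl⟩
    simpa only [Tm.val, Function.update_self,
      Function.update_of_ne (show (1:ℕ) ≠ 2 by omega)] using this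
  show ∃ d, Support M (neqF (.var 3) (.var 0)) (cext M Y 3 d)
  by_contra hcon
  push_neg at hcon
  have hsur : ∀ d : M.D, ∃ g ∈ Y, g 0 = d := by
    intro d
    have hc := hcon d
    rw [supp_neq] at hc
    push_neg at hc
    obtain ⟨g', hg', heq⟩ := hc
    obtain ⟨g, hg, rfl⟩ := hg'
    refine ⟨g, hg, ?_⟩
    simp only [Tm.val, Function.update_self,
      Function.update_of_ne (show (0:ℕ) ≠ 3 by omega)] at heq
    exact heq.symm
  choose F hFY hF0 using hsur
  rw [supp_dep] at hd10
  have hinj : Function.Injective (fun d => F d 1) := by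
    intro a b hab
    have := hd10 (F a) (hFY a) (F b) (hFY b) hab
    rw [hF0, hF0] at this
    exact this
  obtain ⟨a, ha⟩ := (Finite.injective_iff_surjective.1 hinj) d₀
  exact hne' (F a) (hFY a) ha.symm

lemma supportB : ¬ Support MNat phiXY Set.univ := by
  intro H
  have hD : MNat.D = ℕ := rfl
  set Y : Set (ℕ → ℕ) := {g | g 1 = g 0 + 1} with hYdef
  have hant : Support MNat (.and (depF 0 1)
      (.and (depF 1 0) (.iex 2 (neqF (.var 2) (.var 1))))) Y := by
    refine ⟨?_, ?_, ?_⟩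
    · rw [supp_dep]
      intro g hg h hh h0
      have hg' : g 1 = g 0 + 1 := hg
      have hh' : h 1 = h 0 + 1 := hh
      rw [hg', hh', h0]
    · rw [supp_dep]
      intro g hg h hh h1
      have hg' : g 1 = g 0 + 1 := hg
      have hh' : h 1 = h 0 + 1 := hh
      rw [hg', hh'] at h1
      exact Nat.succ_injective h1
    · refine ⟨(0 : ℕ), ?_⟩
      rw [supp_neq]
      rintro g' ⟨g, hg, rfl⟩
      have hg' : g 1 = g 0 + 1 := hg
      simp only [Tm.val, Function.update_self,
        Function.update_of_ne (show (1:ℕ) ≠ 2 by omega)]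
      rw [hg']
      exact fun hc => Nat.succ_ne_zero _ hc.symm
  have hcon := H Y (Set.subset_univ _) hant
  obtain ⟨d, hd⟩ := hcon
  rw [supp_neq] at hd
  have hmem : (fun k => if k = 1 then d + 1 else d) ∈ Y := by simp [hYdef]
  have := hd (Function.update (fun k => if k = 1 then d + 1 else d) 3 d)
    ⟨_, hmem, rfl⟩
  simp only [Tm.val, Function.update_self,
    Function.update_of_ne (show (0:ℕ) ≠ 3 by omega)] at this
  exact this rfl

lemma teamModel_triv (M : Model EmptySig) :
    ∀ (R : RelSig.Rel) (v : Fin (RelSig.rarity R) → M.D),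
      (teamModel M Set.univ).interpRel R v := by
  intro R v
  exact ⟨fun k => if k = 0 then v 0 else v 1, trivial, by simp⟩

lemma tm_relsig_var (t : Tm RelSig) : ∃ i, t = .var i := by
  cases t with
  | var i => exact ⟨i, rfl⟩
  | func f _ => exact f.elim

lemma exists_fresh {B : Type} {n : ℕ} (e : Fin n ↪ B) (s : Finset B)
    (hs : s.card < n) : ∃ b : B, b ∉ s := by
  classical
  by_contra hcon
  push_neg at hcon
  have hsub : Finset.univ.image e ⊆ s := by
    intro b hb
    simp only [Finset.mem_image, Finset.mem_univ, true_and] at hb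
    obtain ⟨k, rfl⟩ := hb
    exact hcon _
  have := Finset.card_le_card hsub
  rw [Finset.card_image_of_injective _ e.injective, Finset.card_univ,
    Fintype.card_fin] at this
  omega

lemma match_elem {A B : Type} {n : ℕ} (e : Fin n ↪ B) (s : Finset ℕ)
    (g : ℕ → A) (h : ℕ → B)
    (hp : ∀ i ∈ s, ∀ j ∈ s, (g i = g j ↔ h i = h j))
    (hcard : s.card < n) (d : A) :
    ∃ b : B, ∀ i ∈ s, (g i = d ↔ h i = b) := by
  classical
  by_cases hex : ∃ i ∈ s, g i = d
  · obtain ⟨i₀, hi₀, hd⟩ := hex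
    refine ⟨h i₀, fun i hi => ?_⟩
    rw [← hd]
    exact hp i hi i₀ hi₀
  · push_neg at hex
    obtain ⟨b, hb⟩ := exists_fresh e (s.image h)
      (lt_of_le_of_lt Finset.card_image_le hcard)
    refine ⟨b, fun i hi => ⟨fun hgi => absurd hgi (hex i hi), fun hhi => ?_⟩⟩
    exact absurd (hhi ▸ Finset.mem_image_of_mem h hi) hb

lemma card_le_erase_succ (s : Finset ℕ) (x : ℕ) :
    s.card ≤ (s.erase x).card + 1 := by
  by_cases hx : x ∈ s
  · rw [Finset.card_erase_add_one hx]
  · rw [Finset.erase_eq_of_notMem hx]; omega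

lemma EF (φ : Fm RelSig) :
    ∀ (M₁ M₂ : Model RelSig), (∀ R v, M₁.interpRel R v) →
      (∀ R v, M₂.interpRel R v) →
    ∀ n : ℕ, φ.fv.card + φ.depth ≤ n →
    (Fin n ↪ M₁.D) → (Fin n ↪ M₂.D) →
    ∀ (g : ℕ → M₁.D) (h : ℕ → M₂.D),
      (∀ i ∈ φ.fv, ∀ j ∈ φ.fv, (g i = g j ↔ h i = h j)) →
      Tarski M₁ g φ → Tarski M₂ h φ := by
  induction φ with
  | rel R ts =>
    intro M₁ M₂ h1 h2 n hn e1 e2 g h hp ht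
    exact h2 R _
  | eq t₁ t₂ =>
    intro M₁ M₂ h1 h2 n hn e1 e2 g h hp ht
    obtain ⟨i, rfl⟩ := tm_relsig_var t₁
    obtain ⟨j, rfl⟩ := tm_relsig_var t₂
    have hi : i ∈ (Fm.eq (σ := RelSig) (.var i) (.var j)).fv := by
      simp [Fm.fv, Tm.fv]
    have hj : j ∈ (Fm.eq (σ := RelSig) (.var i) (.var j)).fv := by
      simp [Fm.fv, Tm.fv]
    exact (hp i hi j hj).1 ht
  | bot =>
    intro M₁ M₂ h1 h2 n hn e1 e2 g h hp ht
    exact ht.elim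
  | and φ ψ ih1 ih2 =>
    intro M₁ M₂ h1 h2 n hn e1 e2 g h hp ht
    simp only [Fm.fv, Fm.depth] at hn hp
    have b1 : φ.fv.card + φ.depth ≤ n := by
      have := Finset.card_le_card (Finset.subset_union_left (s₁ := φ.fv) (s₂ := ψ.fv))
      have := le_max_left φ.depth ψ.depth
      omega
    have b2 : ψ.fv.card + ψ.depth ≤ n := by
      have := Finset.card_le_card (Finset.subset_union_right (s₁ := φ.fv) (s₂ := ψ.fv))
      have := le_max_right φ.depth ψ.depth
      omega
    exact ⟨ih1 M₁ M₂ h1 h2 n b1 e1 e2 g h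
        (fun i hi j hj => hp i (Finset.mem_union_left _ hi) j (Finset.mem_union_left _ hj)) ht.1,
      ih2 M₁ M₂ h1 h2 n b2 e1 e2 g h
        (fun i hi j hj => hp i (Finset.mem_union_right _ hi) j (Finset.mem_union_right _ hj)) ht.2⟩
  | ivee φ ψ ih1 ih2 =>
    intro M₁ M₂ h1 h2 n hn e1 e2 g h hp ht
    simp only [Fm.fv, Fm.depth] at hn hp
    have b1 : φ.fv.card + φ.depth ≤ n := by
      have := Finset.card_le_card (Finset.subset_union_left (s₁ := φ.fv) (s₂ := ψ.fv))
      have := le_max_left φ.depth ψ.depth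
      omega
    have b2 : ψ.fv.card + ψ.depth ≤ n := by
      have := Finset.card_le_card (Finset.subset_union_right (s₁ := φ.fv) (s₂ := ψ.fv))
      have := le_max_right φ.depth ψ.depth
      omega
    rcases ht with ht | ht
    · exact Or.inl (ih1 M₁ M₂ h1 h2 n b1 e1 e2 g h
        (fun i hi j hj => hp i (Finset.mem_union_left _ hi) j (Finset.mem_union_left _ hj)) ht)
    · exact Or.inr (ih2 M₁ M₂ h1 h2 n b2 e1 e2 g h
        (fun i hi j hj => hp i (Finset.mem_union_right _ hi) j (Finset.mem_union_right _ hj)) ht)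
  | imp φ ψ ih1 ih2 =>
    intro M₁ M₂ h1 h2 n hn e1 e2 g h hp ht thφ
    simp only [Fm.fv, Fm.depth] at hn hp
    have b1 : φ.fv.card + φ.depth ≤ n := by
      have := Finset.card_le_card (Finset.subset_union_left (s₁ := φ.fv) (s₂ := ψ.fv))
      have := le_max_left φ.depth ψ.depth
      omega
    have b2 : ψ.fv.card + ψ.depth ≤ n := by
      have := Finset.card_le_card (Finset.subset_union_right (s₁ := φ.fv) (s₂ := ψ.fv))
      have := le_max_right φ.depth ψ.depth
      omega
    have tgφ : Tarski M₁ g φ := ih1 M₂ M₁ h2 h1 n b1 e2 e1 h g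
      (fun i hi j hj => (hp i (Finset.mem_union_left _ hi) j (Finset.mem_union_left _ hj)).symm) thφ
    exact ih2 M₁ M₂ h1 h2 n b2 e1 e2 g h
      (fun i hi j hj => hp i (Finset.mem_union_right _ hi) j (Finset.mem_union_right _ hj)) (ht tgφ)
  | all x φ ih =>
    intro M₁ M₂ h1 h2 n hn e1 e2 g h hp ht
    simp only [Fm.fv, Fm.depth] at hn hp
    intro e'
    have hcard : (φ.fv.erase x).card < n := by omega
    obtain ⟨d, hd⟩ := match_elem e1 (φ.fv.erase x) h g
      (fun i hi j hj => (hp i hi j hj).symm) hcard e'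
    have newhp : ∀ i ∈ φ.fv, ∀ j ∈ φ.fv,
        (Function.update g x d i = Function.update g x d j ↔
         Function.update h x e' i = Function.update h x e' j) := by
      intro i hi j hj
      by_cases hix : i = x <;> by_cases hjx : j = x
      · subst hix; subst hjx; simp
      · subst hix
        rw [Function.update_self, Function.update_of_ne hjx,
          Function.update_self, Function.update_of_ne hjx]
        have := hd j (Finset.mem_erase.2 ⟨hjx, hj⟩)
        exact ⟨fun hh => (this.2 hh.symm).symm, fun hh => (this.1 hh.symm).symm⟩
      · subst hjx
        rw [Function.update_self, Function.update_of_ne hix,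
          Function.update_self, Function.update_of_ne hix]
        have := hd i (Finset.mem_erase.2 ⟨hix, hi⟩)
        exact ⟨fun hh => this.2 hh, fun hh => this.1 hh⟩
      · rw [Function.update_of_ne hix, Function.update_of_ne hjx,
          Function.update_of_ne hix, Function.update_of_ne hjx]
        exact hp i (Finset.mem_erase.2 ⟨hix, hi⟩) j (Finset.mem_erase.2 ⟨hjx, hj⟩)
    have bphi : φ.fv.card + φ.depth ≤ n := by
      have := card_le_erase_succ φ.fv x
      omega
    exact ih M₁ M₂ h1 h2 n bphi e1 e2 _ _ newhp (ht d)
  | iex x φ ih =>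
    intro M₁ M₂ h1 h2 n hn e1 e2 g h hp ht
    simp only [Fm.fv, Fm.depth] at hn hp
    obtain ⟨d, htd⟩ := ht
    have hcard : (φ.fv.erase x).card < n := by omega
    obtain ⟨e', hd⟩ := match_elem e2 (φ.fv.erase x) g h hp hcard d
    have newhp : ∀ i ∈ φ.fv, ∀ j ∈ φ.fv,
        (Function.update g x d i = Function.update g x d j ↔
         Function.update h x e' i = Function.update h x e' j) := by
      intro i hi j hj
      by_cases hix : i = x <;> by_cases hjx : j = x
      · subst hix; subst hjx; simp
      · subst hix
        rw [Function.update_self, Function.update_of_ne hjx,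
          Function.update_self, Function.update_of_ne hjx]
        have := hd j (Finset.mem_erase.2 ⟨hjx, hj⟩)
        exact ⟨fun hh => (this.1 hh.symm).symm, fun hh => (this.2 hh.symm).symm⟩
      · subst hjx
        rw [Function.update_self, Function.update_of_ne hix,
          Function.update_self, Function.update_of_ne hix]
        have := hd i (Finset.mem_erase.2 ⟨hix, hi⟩)
        exact this
      · rw [Function.update_of_ne hix, Function.update_of_ne hjx,
          Function.update_of_ne hix, Function.update_of_ne hjx]
        exact hp i (Finset.mem_erase.2 ⟨hix, hi⟩) j (Finset.mem_erase.2 ⟨hjx, hj⟩)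
    have bphi : φ.fv.card + φ.depth ≤ n := by
      have := card_le_erase_succ φ.fv x
      omega
    exact ⟨e', ih M₁ M₂ h1 h2 n bphi e1 e2 _ _ newhp htd⟩
  | box x φ ih =>
    intro M₁ M₂ h1 h2 n hn e1 e2 g h hp ht
    simp only [Fm.fv, Fm.depth] at hn hp
    intro e'
    have hcard : (φ.fv.erase x).card < n := by omega
    obtain ⟨d, hd⟩ := match_elem e1 (φ.fv.erase x) h g
      (fun i hi j hj => (hp i hi j hj).symm) hcard e'
    have newhp : ∀ i ∈ φ.fv, ∀ j ∈ φ.fv,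
        (Function.update g x d i = Function.update g x d j ↔
         Function.update h x e' i = Function.update h x e' j) := by
      intro i hi j hj
      by_cases hix : i = x <;> by_cases hjx : j = x
      · subst hix; subst hjx; simp
      · subst hix
        rw [Function.update_self, Function.update_of_ne hjx,
          Function.update_self, Function.update_of_ne hjx]
        have := hd j (Finset.mem_erase.2 ⟨hjx, hj⟩)
        exact ⟨fun hh => (this.2 hh.symm).symm, fun hh => (this.1 hh.symm).symm⟩
      · subst hjx
        rw [Function.update_self, Function.update_of_ne hix,
          Function.update_self, Function.update_of_ne hix]
        have := hd i (Finset.mem_erase.2 ⟨hix, hi⟩)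
        exact ⟨fun hh => this.2 hh, fun hh => this.1 hh⟩
      · rw [Function.update_of_ne hix, Function.update_of_ne hjx,
          Function.update_of_ne hix, Function.update_of_ne hjx]
        exact hp i (Finset.mem_erase.2 ⟨hix, hi⟩) j (Finset.mem_erase.2 ⟨hjx, hj⟩)
    have bphi : φ.fv.card + φ.depth ≤ n := by
      have := card_le_erase_succ φ.fv x
      omega
    exact ih M₁ M₂ h1 h2 n bphi e1 e2 _ _ newhp (ht d)


/-- The open InqBT formula `φ(x,y)` is not first-order expressible over
    teams: no first-order sentence `φ*(R)` satisfies
    `M ⊨_X φ(x,y) ⟺ (M, X[x,y]) ⊨ φ*(R)` for all models `M` (empty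
    vocabulary) and teams `X`. -/
theorem stmt16 :
    ¬ ∃ φs : Fm RelSig, φs.fv = ∅ ∧
      ∀ (M : Model EmptySig) (X : Set (ℕ → M.D)) (g : ℕ → M.D),
        (Support M phiXY X ↔ Tarski (teamModel M X) g φs) := by
  rintro ⟨φs, hfv, H⟩
  set N := φs.depth with hN
  have hA : Support (Mfin N) phiXY Set.univ :=
    supportA (Mfin N) (by unfold Mfin; exact Finite.of_fintype _)
  have hB := supportB
  have g₁ : ℕ → (Mfin N).D := fun _ => (0 : Fin (N+1))
  have g₂ : ℕ → MNat.D := fun _ => (0 : ℕ)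
  have t1 : Tarski (teamModel (Mfin N) Set.univ) g₁ φs := (H (Mfin N) Set.univ g₁).1 hA
  have e1 : Fin N ↪ (teamModel (Mfin N) Set.univ).D :=
    ⟨Fin.castSucc, Fin.castSucc_injective N⟩
  have e2 : Fin N ↪ (teamModel MNat Set.univ).D :=
    ⟨fun k => (k.1 : ℕ), fun a b hab => Fin.ext hab⟩
  have hbound : φs.fv.card + φs.depth ≤ N := by rw [hfv]; simp [hN]
  have hp : ∀ i ∈ φs.fv, ∀ j ∈ φs.fv, (g₁ i = g₁ j ↔ g₂ i = g₂ j) := by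
    rw [hfv]; intro i hi; exact absurd hi (Finset.notMem_empty i)
  have t2 : Tarski (teamModel MNat Set.univ) g₂ φs :=
    EF φs (teamModel (Mfin N) Set.univ) (teamModel MNat Set.univ)
      (teamModel_triv (Mfin N)) (teamModel_triv MNat) N hbound e1 e2 g₁ g₂ hp t1
  exact hB ((H MNat Set.univ g₂).2 t2)
end
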